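/- For all integers m ≥ 1 and k ≥ 1, R(mK₂, (k+1)K₄) = 3k + 2m + 2 if k < m - 1, and R(mK₂, (k+1)K₄) = 4k + m + 3 if k ≥ m - 1; moreover, the two expressions agree when k = m - 1. -/

import Mathlib

/-- The spanning subgraph of the complete graph on `Fin N` formed by the edges of color `i`
under the 2-edge-coloring `C` (colors are booleans). -/
def colorGraph {N : ℕ} (C : Sym2 (Fin N) → Bool) (i : Bool) : SimpleGraph (Fin N) where
  Adj u v := u ≠ v ∧ C s(u, v) = i
  symm := by
    constructor
    intro u v h
    exact ⟨h.1.symm, by rw [Sym2.eq_swap]; exact h.2⟩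
  loopless := by
    constructor
    intro u h
    exact h.1 rfl

/-- `S` is a monochromatic copy of `K_r` in color `i`. -/
def IsMonoClique {N : ℕ} (C : Sym2 (Fin N) → Bool) (i : Bool) (r : ℕ)
    (S : Finset (Fin N)) : Prop :=
  S.card = r ∧ ∀ u ∈ S, ∀ v ∈ S, u ≠ v → C s(u, v) = i

/-- The coloring `C` contains `n` pairwise vertex-disjoint copies of `K_r` in color `i`. -/
def HasMonoCliqueMatching {N : ℕ} (C : Sym2 (Fin N) → Bool) (i : Bool) (n r : ℕ) : Prop :=
  ∃ f : Fin n → Finset (Fin N),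
    (∀ j, IsMonoClique C i r (f j)) ∧
    ∀ j l, j ≠ l → Disjoint (f j) (f l)

/-- The coloring `C` contains a monochromatic connected `nK_r`-matching: `n` pairwise
vertex-disjoint copies of `K_r` in some color `i`, all of whose vertices lie in one
connected component of the spanning subgraph of color `i`. -/
def HasConnCliqueMatching {N : ℕ} (C : Sym2 (Fin N) → Bool) (n r : ℕ) : Prop :=
  ∃ i : Bool, ∃ f : Fin n → Finset (Fin N),
    (∀ j, IsMonoClique C i r (f j)) ∧
    (∀ j l, j ≠ l → Disjoint (f j) (f l)) ∧
    ∀ u v : Fin N, (∃ j, u ∈ f j) → (∃ j, v ∈ f j) → (colorGraph C i).Reachable u v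

/-- The coloring `C` contains a copy (as a subgraph) of `G` all of whose edges have color `i`. -/
def HasMonoCopy {N : ℕ} {V : Type*} (C : Sym2 (Fin N) → Bool) (i : Bool)
    (G : SimpleGraph V) : Prop :=
  ∃ f : V ↪ Fin N, ∀ u v : V, G.Adj u v → C s(f u, f v) = i

/-!
For the upper bound take a maximum red matching; it has `s < m` edges. By maximality the
`N - 2s` uncovered vertices span a blue clique `U`, and each matching edge has an endpoint
that is red to at most one vertex of `U`: if `x` were red to `u ∈ U` and its partner `z` to
`u' ≠ u`, then `xu, zu'` could replace `xz`. Greedily, `k + 1` disjoint blue `K₄`s are built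
from one such endpoint and three vertices of `U`, or from four vertices of `U`; this needs
`3(k + 1) < N - 2s` and `4(k + 1) ≤ N - s`, which `N ≥ 3k + 2m + 2` and `N ≥ 4k + m + 3` provide.

For the lower bounds colour red either the edges inside a set `A` of at most `2m - 1` vertices
(every blue `K₄` has at least three vertices outside `A`) or the edges meeting a set `A` of at
most `m - 1` vertices (every red edge meets `A`, every blue `K₄` avoids it).
-/

open Finset Function

theorem Nat.exists_lt_and_not_succ {P : ℕ → Prop} (h0 : P 0) {m : ℕ} (hm : ¬ P m) :
    ∃ s < m, P s ∧ ¬ P (s + 1) := by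
  induction m with
  | zero => exact absurd h0 hm
  | succ m ih =>
    by_cases h : P m
    · exact ⟨m, lt_add_one m, h, hm⟩
    · obtain ⟨s, hs, hPs⟩ := ih h
      exact ⟨s, hs.trans (lt_add_one m), hPs⟩

section Families

variable {α : Type*} {n : ℕ}

theorem pairwise_disjoint_fin_cons {K : Finset α} {f : Fin n → Finset α}
    (hK : ∀ j, Disjoint K (f j)) (hf : Pairwise (Disjoint on f)) :
    Pairwise (Disjoint on (Fin.cons K f : Fin (n + 1) → Finset α)) := by
  intro a b hab
  cases a using Fin.cases <;> cases b using Fin.cases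
  · exact absurd rfl hab
  · simpa [onFun] using hK _
  · simpa [onFun] using (hK _).symm
  · simpa [onFun] using hf (fun h => hab (congrArg Fin.succ h))

theorem pairwise_disjoint_update {ι : Type*} [DecidableEq ι] {f : ι → Finset α} {j : ι}
    {K : Finset α} (hf : Pairwise (Disjoint on f)) (hK : ∀ l ≠ j, Disjoint K (f l)) :
    Pairwise (Disjoint on update f j K) := by
  intro a b hab
  rcases eq_or_ne a j with rfl | ha
  · simpa [onFun, update_of_ne hab.symm] using hK b hab.symm
  rcases eq_or_ne b j with rfl | hb
  · simpa [onFun, update_of_ne ha] using (hK a ha).symm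
  · simpa [onFun, update_of_ne ha, update_of_ne hb] using hf hab

theorem card_mul_le_of_pairwise_disjoint [DecidableEq α] {f : Fin n → Finset α}
    (hf : Pairwise (Disjoint on f)) {S : Finset α} {c : ℕ} (hc : ∀ j, c ≤ #(f j ∩ S)) :
    n * c ≤ #S :=
  calc n * c = ∑ _j : Fin n, c := by simp
    _ ≤ ∑ j, #(f j ∩ S) := sum_le_sum fun j _ => hc j
    _ = #(univ.biUnion fun j => f j ∩ S) :=
      (card_biUnion fun a _ b _ hab => (hf hab).mono inter_subset_left inter_subset_left).symm
    _ ≤ #S := card_le_card (biUnion_subset.2 fun _ _ => inter_subset_right)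

end Families

theorem Fin.exists_card_lt_card_compl_lt {N a b : ℕ} (ha : 0 < a) (hb : 0 < b)
    (hN : N + 1 < a + b) : ∃ A : Finset (Fin N), #A < a ∧ #Aᶜ < b := by
  obtain ⟨A, -, hA⟩ := exists_subset_card_eq (s := (univ : Finset (Fin N))) (n := min (a - 1) N)
    (by simp)
  refine ⟨A, by omega, ?_⟩
  rw [card_compl, Fintype.card_fin]
  omega

namespace SimpleGraph

variable {α : Type*} [DecidableEq α] {G : SimpleGraph α} {U Y : Finset α} {r n : ℕ}

theorem exists_isNClique_subset_union (hU : G.IsClique (U : Set α)) (hYU : Disjoint Y U)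
    (hY : ∀ y ∈ Y, ∃ w, ∀ u ∈ U, u ≠ w → G.Adj y u)
    (hU_card : r * (n + 1) < #U) (hUY_card : (r + 1) * (n + 1) ≤ #U + #Y) :
    ∃ K ⊆ U ∪ Y, G.IsNClique (r + 1) K ∧ (0 < n → r * n < #(U \ K)) ∧
      (r + 1) * n ≤ #(U \ K) + #(Y \ K) := by
  have e₁ := mul_add_one r n
  have e₂ := add_one_mul r n
  have e₃ := mul_add_one (r + 1) n
  rcases Y.eq_empty_or_nonempty with rfl | ⟨y, hy⟩
  · rw [card_empty, add_zero] at hUY_card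
    obtain ⟨K, hKU, hK⟩ := exists_subset_card_eq (s := U) (n := r + 1) (by omega)
    refine ⟨K, by simpa using hKU, ⟨hU.subset (by simpa using hKU), hK⟩, ?_, ?_⟩ <;>
      rw [card_sdiff_of_subset hKU, hK] <;> omega
  · obtain ⟨w, hw⟩ := hY y hy
    have hyU : y ∉ U := Finset.disjoint_left.1 hYU hy
    obtain ⟨T, hTU, hT⟩ := exists_subset_card_eq (s := U.erase w) (n := r)
      (by have := pred_card_le_card_erase (s := U) (a := w); omega)
    have hTU' : T ⊆ U := hTU.trans (erase_subset w U)
    have hK : G.IsNClique (r + 1) (insert y T) :=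
      IsNClique.insert ⟨hU.subset (by simpa using hTU'), hT⟩ fun u hu =>
        hw u (hTU' hu) (ne_of_mem_erase (hTU hu))
    have hUK : U \ insert y T = U \ T := sdiff_insert_of_notMem hyU T
    have hYK : Y \ insert y T = Y.erase y := by
      rw [sdiff_insert, sdiff_eq_self_of_disjoint (hYU.mono_right hTU')]
    refine ⟨insert y T, insert_subset (mem_union_right U hy) (hTU'.trans subset_union_left), hK,
      ?_, ?_⟩ <;>
      rw [hUK, card_sdiff_of_subset hTU', hT]
    · omega
    · rw [hYK, card_erase_of_mem hy]
      have := card_pos.2 ⟨y, hy⟩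
      omega

theorem exists_pairwise_disjoint_isNClique (hU : G.IsClique (U : Set α)) (hYU : Disjoint Y U)
    (hY : ∀ y ∈ Y, ∃ w, ∀ u ∈ U, u ≠ w → G.Adj y u)
    (hU_card : 0 < n → r * n < #U) (hUY_card : (r + 1) * n ≤ #U + #Y) :
    ∃ g : Fin n → Finset α, (∀ j, G.IsNClique (r + 1) (g j)) ∧ Pairwise (Disjoint on g) ∧
      ∀ j, g j ⊆ U ∪ Y := by
  induction n generalizing U Y with
  | zero => exact ⟨finZeroElim, finZeroElim, fun a => a.elim0, finZeroElim⟩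
  | succ n ih =>
    obtain ⟨K, hKUY, hK, hU_card', hUY_card'⟩ :=
      exists_isNClique_subset_union hU hYU hY (hU_card n.succ_pos) hUY_card
    have hY' : ∀ y ∈ Y \ K, ∃ w, ∀ u ∈ U \ K, u ≠ w → G.Adj y u := fun y hy =>
      (hY y (mem_sdiff.1 hy).1).imp fun w hw u hu => hw u (mem_sdiff.1 hu).1
    obtain ⟨g, hg, hgd, hgUY⟩ := ih (hU.subset (by simp)) (hYU.mono sdiff_subset sdiff_subset)
      hY' hU_card' hUY_card'
    refine ⟨Fin.cons K g, Fin.cases hK hg, pairwise_disjoint_fin_cons (fun j => ?_) hgd,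
      Fin.cases hKUY fun j => (hgUY j).trans (union_subset_union sdiff_subset sdiff_subset)⟩
    rw [← union_sdiff_distrib] at hgUY
    exact disjoint_of_subset_right (hgUY j) disjoint_sdiff

end SimpleGraph

section Coloring

variable {N : ℕ} {C : Sym2 (Fin N) → Bool} {i : Bool} {r n : ℕ}

theorem isMonoClique_iff_isNClique {S : Finset (Fin N)} :
    IsMonoClique C i r S ↔ (colorGraph C i).IsNClique r S := by
  rw [IsMonoClique, SimpleGraph.isNClique_iff, and_comm]
  exact and_congr_left' <| forall₂_congr fun u _ => forall₂_congr fun v _ =>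
    imp_congr_right fun huv => (and_iff_right huv).symm

theorem isMonoClique_two_iff {S : Finset (Fin N)} :
    IsMonoClique C i 2 S ↔ ∃ x y, x ≠ y ∧ C s(x, y) = i ∧ S = {x, y} := by
  constructor
  · rintro ⟨hS, hC⟩
    obtain ⟨x, y, hxy, rfl⟩ := card_eq_two.1 hS
    exact ⟨x, y, hxy, hC x (by simp) y (by simp) hxy, rfl⟩
  · rintro ⟨x, y, hxy, hC, rfl⟩
    refine ⟨card_pair hxy, ?_⟩
    simp only [mem_insert, mem_singleton]
    rintro u (rfl | rfl) v (rfl | rfl) huv <;> first | exact absurd rfl huv | exact hC |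
      rw [Sym2.eq_swap]; exact hC

theorem hasMonoCliqueMatching_succ_of_disjoint {f : Fin n → Finset (Fin N)}
    (hf : ∀ j, IsMonoClique C i r (f j)) (hd : Pairwise (Disjoint on f)) {K : Finset (Fin N)}
    (hK : IsMonoClique C i r K) (hKf : ∀ j, Disjoint K (f j)) :
    HasMonoCliqueMatching C i (n + 1) r :=
  ⟨Fin.cons K f, Fin.cases hK hf, pairwise_disjoint_fin_cons hKf hd⟩

theorem hasMonoCliqueMatching_succ_of_exchange {f : Fin n → Finset (Fin N)}
    (hf : ∀ j, IsMonoClique C i r (f j)) (hd : Pairwise (Disjoint on f)) {j : Fin n}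
    {K₁ K₂ : Finset (Fin N)} (hK₁ : IsMonoClique C i r K₁) (hK₂ : IsMonoClique C i r K₂)
    (hK₁₂ : Disjoint K₁ K₂) (hK₁f : ∀ l ≠ j, Disjoint K₁ (f l))
    (hK₂f : ∀ l ≠ j, Disjoint K₂ (f l)) :
    HasMonoCliqueMatching C i (n + 1) r := by
  refine hasMonoCliqueMatching_succ_of_disjoint (f := update f j K₁) (fun l => ?_)
    (pairwise_disjoint_update hd hK₁f) hK₂ fun l => ?_ <;>
    rcases eq_or_ne l j with rfl | hl
  · simpa using hK₁
  · simpa [update_of_ne hl] using hf l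
  · simpa using hK₁₂.symm
  · simpa [update_of_ne hl] using hK₂f l hl

theorem not_hasMonoCliqueMatching_of_card_lt (S : Finset (Fin N)) {c : ℕ}
    (hS : ∀ T, IsMonoClique C i r T → c ≤ #(T ∩ S)) (hlt : #S < n * c) :
    ¬ HasMonoCliqueMatching C i n r := fun ⟨_, hf, hd⟩ =>
  hlt.not_ge (card_mul_le_of_pairwise_disjoint hd fun j => hS _ (hf j))

end Coloring

section MaximumMatching

variable {N s : ℕ} {C : Sym2 (Fin N) → Bool} {f : Fin s → Finset (Fin N)}

def uncovered (f : Fin s → Finset (Fin N)) : Finset (Fin N) := (univ.biUnion f)ᶜ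

theorem mem_uncovered {u : Fin N} : u ∈ uncovered f ↔ ∀ j, u ∉ f j := by
  simp [uncovered]

theorem card_uncovered (hf : ∀ j, #(f j) = 2) (hd : Pairwise (Disjoint on f)) :
    #(uncovered f) = N - 2 * s := by
  rw [uncovered, card_compl, Fintype.card_fin, card_biUnion (hd.set_pairwise _)]
  simp [hf, mul_comm]

theorem isClique_uncovered (hf : ∀ j, IsMonoClique C true 2 (f j))
    (hd : Pairwise (Disjoint on f)) (hmax : ¬ HasMonoCliqueMatching C true (s + 1) 2) :
    (colorGraph C false).IsClique (uncovered f : Set (Fin N)) := by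
  intro u hu v hv huv
  refine ⟨huv, Bool.not_eq_true _ ▸ fun h => hmax ?_⟩
  refine hasMonoCliqueMatching_succ_of_disjoint hf hd
    (isMonoClique_two_iff.2 ⟨u, v, huv, h, rfl⟩) fun j => ?_
  simp [mem_uncovered.1 hu j, mem_uncovered.1 hv j]

theorem exists_mem_forall_adj_uncovered (hf : ∀ j, IsMonoClique C true 2 (f j))
    (hd : Pairwise (Disjoint on f)) (hmax : ¬ HasMonoCliqueMatching C true (s + 1) 2)
    (j : Fin s) : ∃ y ∈ f j, ∃ w, ∀ u ∈ uncovered f, u ≠ w → (colorGraph C false).Adj y u := by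
  obtain ⟨x, z, hxz, -, hfj⟩ := isMonoClique_two_iff.1 (hf j)
  have hx : x ∈ f j := by simp [hfj]
  have hz : z ∈ f j := by simp [hfj]
  have hne : ∀ u ∈ uncovered f, ∀ v ∈ f j, v ≠ u := fun u hu v hv h =>
    mem_uncovered.1 hu j (h ▸ hv)
  have hout : ∀ l ≠ j, ∀ v ∈ f j, v ∉ f l := fun l hl v hv =>
    Finset.disjoint_left.1 (hd hl.symm) hv
  by_cases hx_red : ∃ u ∈ uncovered f, C s(x, u) = true
  · obtain ⟨u, hu, hxu⟩ := hx_red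
    refine ⟨z, hz, u, fun u' hu' hu'u => ⟨hne u' hu' z hz, ?_⟩⟩
    refine Bool.not_eq_true _ ▸ fun hzu' => hmax ?_
    refine hasMonoCliqueMatching_succ_of_exchange hf hd (j := j)
      (isMonoClique_two_iff.2 ⟨x, u, hne u hu x hx, hxu, rfl⟩)
      (isMonoClique_two_iff.2 ⟨z, u', hne u' hu' z hz, hzu', rfl⟩) ?_ ?_ ?_
    · simp [hxz.symm, hne u hu z hz, (hne u' hu' x hx).symm, hu'u]
    · intro l hl
      simp [hout l hl x hx, mem_uncovered.1 hu l]
    · intro l hl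
      simp [hout l hl z hz, mem_uncovered.1 hu' l]
  · simp only [not_exists, not_and] at hx_red
    exact ⟨x, hx, x, fun u hu _ => ⟨hne u hu x hx, by simpa using hx_red u hu⟩⟩

end MaximumMatching

/-- `Arrows N m n r` is the arrow relation `N → (mK₂, nKᵣ)`, red being `true`. -/
def Arrows (N m n r : ℕ) : Prop :=
  ∀ C : Sym2 (Fin N) → Bool, HasMonoCliqueMatching C true m 2 ∨ HasMonoCliqueMatching C false n r

theorem arrows_of_le {N m k : ℕ} (h₁ : 3 * k + 2 * m + 2 ≤ N) (h₂ : 4 * k + m + 3 ≤ N) :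
    Arrows N m (k + 1) 4 := by
  classical
  intro C
  refine or_iff_not_imp_left.2 fun hm => ?_
  have h₀ : HasMonoCliqueMatching C true 0 2 := ⟨finZeroElim, finZeroElim, fun a => a.elim0⟩
  obtain ⟨s, hsm, ⟨f, hf, hd⟩, hmax⟩ :=
    Nat.exists_lt_and_not_succ (P := (HasMonoCliqueMatching C true · 2)) h₀ hm
  set Y := (univ.biUnion f).filter
    fun y => ∃ w, ∀ u ∈ uncovered f, u ≠ w → (colorGraph C false).Adj y u
  have hY : s ≤ #Y := by
    have := card_mul_le_of_pairwise_disjoint hd (S := Y) (c := 1) fun j => by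
      obtain ⟨y, hy, hyw⟩ := exists_mem_forall_adj_uncovered hf hd hmax j
      exact card_pos.2
        ⟨y, mem_inter.2 ⟨hy, mem_filter.2 ⟨mem_biUnion.2 ⟨j, mem_univ _, hy⟩, hyw⟩⟩⟩
    rwa [mul_one] at this
  have hYU : Disjoint Y (uncovered f) := disjoint_compl_right.mono_left (filter_subset _ _)
  have hU := card_uncovered (fun j => (hf j).1) hd
  obtain ⟨g, hg, hgd, -⟩ := SimpleGraph.exists_pairwise_disjoint_isNClique (r := 3) (n := k + 1)
    (isClique_uncovered hf hd hmax) hYU (fun y hy => (mem_filter.1 hy).2) (fun _ => by omega)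
    (by omega)
  exact ⟨g, fun j => isMonoClique_iff_isNClique.2 (hg j), hgd⟩

section Colorings

variable {N m n r : ℕ} {A T : Finset (Fin N)}

def cliqueColoring (A : Finset (Fin N)) : Sym2 (Fin N) → Bool :=
  Sym2.lift ⟨fun u v => decide (u ∈ A ∧ v ∈ A), fun _ _ => decide_eq_decide.2 and_comm⟩

def splitColoring (A : Finset (Fin N)) : Sym2 (Fin N) → Bool :=
  Sym2.lift ⟨fun u v => decide (u ∈ A ∨ v ∈ A), fun _ _ => decide_eq_decide.2 or_comm⟩

@[simp]
theorem cliqueColoring_mk (u v : Fin N) : cliqueColoring A s(u, v) = decide (u ∈ A ∧ v ∈ A) :=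
  rfl

@[simp]
theorem splitColoring_mk (u v : Fin N) : splitColoring A s(u, v) = decide (u ∈ A ∨ v ∈ A) :=
  rfl

theorem IsMonoClique.subset_of_cliqueColoring (hT : IsMonoClique (cliqueColoring A) true r T)
    (hr : 2 ≤ r) : T ⊆ A := fun x hx => by
  obtain ⟨y, hy, hyx⟩ := exists_mem_ne (by rw [hT.1]; omega) x
  exact (of_decide_eq_true (hT.2 x hx y hy hyx.symm)).1

theorem IsMonoClique.card_inter_le_one_of_cliqueColoring
    (hT : IsMonoClique (cliqueColoring A) false r T) : #(T ∩ A) ≤ 1 :=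
  card_le_one.2 fun x hx y hy => by_contra fun hxy => by
    rw [mem_inter] at hx hy
    simpa [hx.2, hy.2] using hT.2 x hx.1 y hy.1 hxy

theorem IsMonoClique.inter_nonempty_of_splitColoring
    (hT : IsMonoClique (splitColoring A) true r T) (hr : 2 ≤ r) : (T ∩ A).Nonempty := by
  obtain ⟨x, hx, y, hy, hxy⟩ := one_lt_card.1 (by rw [hT.1]; omega)
  have := hT.2 x hx y hy hxy
  rw [splitColoring_mk, decide_eq_true_eq] at this
  exact this.elim (fun h => ⟨x, mem_inter.2 ⟨hx, h⟩⟩) fun h => ⟨y, mem_inter.2 ⟨hy, h⟩⟩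

theorem IsMonoClique.disjoint_of_splitColoring (hT : IsMonoClique (splitColoring A) false r T)
    (hr : 2 ≤ r) : Disjoint T A :=
  Finset.disjoint_left.2 fun x hx hxA => by
    obtain ⟨y, hy, hyx⟩ := exists_mem_ne (by rw [hT.1]; omega) x
    simpa [hxA] using hT.2 x hx y hy hyx.symm

theorem not_hasMonoCliqueMatching_cliqueColoring_true (hA : #A < 2 * m) :
    ¬ HasMonoCliqueMatching (cliqueColoring A) true m 2 :=
  not_hasMonoCliqueMatching_of_card_lt A (c := 2)
    (fun _ hT => by rw [inter_eq_left.2 (hT.subset_of_cliqueColoring le_rfl), hT.1])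
    (by rwa [mul_comm])

theorem not_hasMonoCliqueMatching_cliqueColoring_false (hA : #Aᶜ < n * (r - 1)) :
    ¬ HasMonoCliqueMatching (cliqueColoring A) false n r :=
  not_hasMonoCliqueMatching_of_card_lt Aᶜ (fun T hT => by
    have := card_sdiff_add_card_inter T A
    rw [← sdiff_eq_inter_compl]
    have := hT.card_inter_le_one_of_cliqueColoring
    have := hT.1
    omega) hA

theorem not_hasMonoCliqueMatching_splitColoring_true (hA : #A < m) :
    ¬ HasMonoCliqueMatching (splitColoring A) true m 2 :=
  not_hasMonoCliqueMatching_of_card_lt A (c := 1)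
    (fun _ hT => card_pos.2 (hT.inter_nonempty_of_splitColoring le_rfl)) (by rwa [mul_one])

theorem not_hasMonoCliqueMatching_splitColoring_false (hr : 2 ≤ r) (hA : #Aᶜ < n * r) :
    ¬ HasMonoCliqueMatching (splitColoring A) false n r :=
  not_hasMonoCliqueMatching_of_card_lt Aᶜ (fun _ hT => by
    rw [inter_eq_left.2 (subset_compl_iff_disjoint_right.2 (hT.disjoint_of_splitColoring hr)),
      hT.1]) hA

theorem not_arrows_of_lt_three_mul_add {k : ℕ} (hm : 0 < m) (hN : N < 3 * k + 2 * m + 2) :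
    ¬ Arrows N m (k + 1) 4 := fun h => by
  obtain ⟨A, hA, hAc⟩ :=
    Fin.exists_card_lt_card_compl_lt (N := N) (a := 2 * m) (b := (k + 1) * 3) (by omega)
      (by omega) (by omega)
  exact (h (cliqueColoring A)).elim (not_hasMonoCliqueMatching_cliqueColoring_true hA)
    (not_hasMonoCliqueMatching_cliqueColoring_false hAc)

theorem not_arrows_of_lt_four_mul_add {k : ℕ} (hm : 0 < m) (hN : N < 4 * k + m + 3) :
    ¬ Arrows N m (k + 1) 4 := fun h => by
  obtain ⟨A, hA, hAc⟩ :=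
    Fin.exists_card_lt_card_compl_lt (N := N) (a := m) (b := (k + 1) * 4) hm (by omega)
      (by omega)
  exact (h (splitColoring A)).elim (not_hasMonoCliqueMatching_splitColoring_true hA)
    (not_hasMonoCliqueMatching_splitColoring_false (by norm_num) hAc)

end Colorings

theorem ramsey_matching_vs_K4s_general (m k : ℕ) (hm : 1 ≤ m) :
    (k < m - 1 →
      IsLeast {N : ℕ | ∀ C : Sym2 (Fin N) → Bool,
          HasMonoCliqueMatching C true m 2 ∨ HasMonoCliqueMatching C false (k + 1) 4}
        (3 * k + 2 * m + 2)) ∧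
    (m - 1 ≤ k →
      IsLeast {N : ℕ | ∀ C : Sym2 (Fin N) → Bool,
          HasMonoCliqueMatching C true m 2 ∨ HasMonoCliqueMatching C false (k + 1) 4}
        (4 * k + m + 3)) ∧
    (k = m - 1 → 3 * k + 2 * m + 2 = 4 * k + m + 3) := by
  refine ⟨fun hkm => ⟨arrows_of_le le_rfl (by omega), fun N hN => ?_⟩,
    fun hkm => ⟨arrows_of_le (by omega) le_rfl, fun N hN => ?_⟩, fun hkm => by omega⟩
  · exact not_lt.1 fun hlt => not_arrows_of_lt_three_mul_add hm hlt hN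
  · exact not_lt.1 fun hlt => not_arrows_of_lt_four_mul_add hm hlt hN

/-- For all `m ≥ 1` and `k ≥ 1`: `R(mK₂, (k+1)K₄) = 3k + 2m + 2` if `k < m - 1`, and
`R(mK₂, (k+1)K₄) = 4k + m + 3` if `k ≥ m - 1`; moreover the two expressions agree when
`k = m - 1`. Here `true` is red and `false` is blue: the Ramsey number is the least `N`
such that every coloring of `K_N` contains a red matching of size `m` or `k + 1` pairwise
vertex-disjoint blue copies of `K₄`. -/
theorem ramsey_matching_vs_K4s (m k : ℕ) (hm : 1 ≤ m) (hk : 1 ≤ k) :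
    (k < m - 1 →
      IsLeast {N : ℕ | ∀ C : Sym2 (Fin N) → Bool,
          HasMonoCliqueMatching C true m 2 ∨ HasMonoCliqueMatching C false (k + 1) 4}
        (3 * k + 2 * m + 2)) ∧
    (m - 1 ≤ k →
      IsLeast {N : ℕ | ∀ C : Sym2 (Fin N) → Bool,
          HasMonoCliqueMatching C true m 2 ∨ HasMonoCliqueMatching C false (k + 1) 4}
        (4 * k + m + 3)) ∧
    (k = m - 1 → 3 * k + 2 * m + 2 = 4 * k + m + 3) :=
  ramsey_matching_vs_K4s_general m k hm
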